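/- Let Ω ⊆ ℝ³ be an open set and ω ∈ ℂ with ω ≠ 0. Let ε, μ, ξ, ζ : Ω → ℂ^{3×3} be of class C², and let E, H : Ω → ℂ³ and J_e, J_m : Ω → ℂ³ be of class C². Assume the bi-anisotropic Maxwell system holds pointwise on Ω: curl H = iω(εE + ξH) + J_e and curl E = −iω(ζE + μH) + J_m. Then for each k ∈ {1,2,3} the pair (E_k, H_k) of k-th components satisfies pointwise on Ω the coupled second-order system: −div(ε∇E_k + ξ∇H_k) = div((∂_k ε)E + (∂_k ξ)H − ε(e_k × (−iωζE − iωμH + J_m)) − ξ(e_k × (iωεE + iωξH + J_e)) − (i/ω) e_k div J_e), and −div(ζ∇E_k + μ∇H_k) = div((∂_k ζ)E + (∂_k μ)H − μ(e_k × (iωεE + iωξH + J_e)) + ζ(e_k × (iωζE + iωμH − J_m)) + (i/ω) e_k div J_m). -/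

import Mathlib

/-! Put `D = εE + ξH`. Taking the divergence of the first Maxwell equation gives
`iω div D + div Jₑ = 0`. Since `eₖ × curl E = ∇Eₖ - ∂ₖE` (and likewise for `H`), the two fields
under the divergences of the first claimed identity add up to `∂ₖD - (i/ω) (div Jₑ) eₖ`, whose
divergence is `∂ₖ (div D - (i/ω) div Jₑ) = 0` by the symmetry of second derivatives. The second
identity is the same computation for `D = ζE + μH` and the second Maxwell equation. -/

open Matrix MeasureTheory

noncomputable section

/-- Partial derivative of a scalar function in the j-th coordinate direction. -/
def pd3 (j : Fin 3) (f : (Fin 3 → ℝ) → ℂ) (x : Fin 3 → ℝ) : ℂ :=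
  fderiv ℝ f x (Pi.single j 1)

/-- Divergence of a vector field. -/
def vdiv (F : (Fin 3 → ℝ) → Fin 3 → ℂ) (x : Fin 3 → ℝ) : ℂ :=
  ∑ j : Fin 3, pd3 j (fun y => F y j) x

/-- Curl of a vector field. -/
def vcurl (F : (Fin 3 → ℝ) → Fin 3 → ℂ) (x : Fin 3 → ℝ) : Fin 3 → ℂ :=
  ![pd3 1 (fun y => F y 2) x - pd3 2 (fun y => F y 1) x,
    pd3 2 (fun y => F y 0) x - pd3 0 (fun y => F y 2) x,
    pd3 0 (fun y => F y 1) x - pd3 1 (fun y => F y 0) x]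

/-- Gradient of a scalar function. -/
def grad3 (u : (Fin 3 → ℝ) → ℂ) (x : Fin 3 → ℝ) : Fin 3 → ℂ := fun j => pd3 j u x

/-- Cross product on ℂ³. -/
def cross3 (a b : Fin 3 → ℂ) : Fin 3 → ℂ :=
  ![a 1 * b 2 - a 2 * b 1, a 2 * b 0 - a 0 * b 2, a 0 * b 1 - a 1 * b 0]

/-- The k-th standard basis vector of ℝ³ viewed in ℂ³. -/
def e3 (k : Fin 3) : Fin 3 → ℂ := Pi.single k 1

/-- Entrywise partial derivative of a matrix field in the k-th direction. -/
def mpd3 (k : Fin 3) (a : (Fin 3 → ℝ) → Matrix (Fin 3) (Fin 3) ℂ) (x : Fin 3 → ℝ) :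
    Matrix (Fin 3) (Fin 3) ℂ :=
  Matrix.of fun i j => pd3 k (fun y => a y i j) x

open Filter Topology

section PartialDerivative

variable {f g : (Fin 3 → ℝ) → ℂ} {x : Fin 3 → ℝ}

lemma pd3_congr (h : f =ᶠ[𝓝 x] g) (j : Fin 3) : pd3 j f x = pd3 j g x := by
  rw [pd3, pd3, h.fderiv_eq]

lemma pd3_add (hf : DifferentiableAt ℝ f x) (hg : DifferentiableAt ℝ g x) (j : Fin 3) :
    pd3 j (fun y => f y + g y) x = pd3 j f x + pd3 j g x := by
  simp only [pd3, fderiv_fun_add hf hg, _root_.add_apply]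

lemma pd3_sub (hf : DifferentiableAt ℝ f x) (hg : DifferentiableAt ℝ g x) (j : Fin 3) :
    pd3 j (fun y => f y - g y) x = pd3 j f x - pd3 j g x := by
  simp only [pd3, fderiv_fun_sub hf hg, _root_.sub_apply]

lemma pd3_const_mul (hf : DifferentiableAt ℝ f x) (c : ℂ) (j : Fin 3) :
    pd3 j (fun y => c * f y) x = c * pd3 j f x := by
  simp only [pd3, fderiv_const_mul hf, _root_.smul_apply, smul_eq_mul]

lemma pd3_mul (hf : DifferentiableAt ℝ f x) (hg : DifferentiableAt ℝ g x) (j : Fin 3) :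
    pd3 j (fun y => f y * g y) x = pd3 j f x * g x + f x * pd3 j g x := by
  simp only [pd3, fderiv_fun_mul hf hg, _root_.add_apply,
    _root_.smul_apply, smul_eq_mul]
  ring

lemma pd3_sum {ι : Type*} (s : Finset ι) {F : ι → (Fin 3 → ℝ) → ℂ}
    (hF : ∀ i ∈ s, DifferentiableAt ℝ (F i) x) (j : Fin 3) :
    pd3 j (fun y => ∑ i ∈ s, F i y) x = ∑ i ∈ s, pd3 j (F i) x := by
  simp only [pd3, fderiv_fun_sum hF, _root_.sum_apply]

lemma pd3_comm (hf : ContDiffAt ℝ 2 f x) (i j : Fin 3) :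
    pd3 i (pd3 j f) x = pd3 j (pd3 i f) x := by
  have hd : DifferentiableAt ℝ (fderiv ℝ f) x :=
    (hf.fderiv_right le_rfl).differentiableAt one_ne_zero
  have h (a b : Fin 3) :
      pd3 a (pd3 b f) x = fderiv ℝ (fderiv ℝ f) x (Pi.single a 1) (Pi.single b 1) := by
    change fderiv ℝ (fun y => fderiv ℝ f y (Pi.single b 1)) x (Pi.single a 1) = _
    simp [fderiv_clm_apply hd (differentiableAt_const _)]
  rw [h, h, hf.isSymmSndFDerivAt (by simp)]

end PartialDerivative

def vpd3 (k : Fin 3) (F : (Fin 3 → ℝ) → Fin 3 → ℂ) (x : Fin 3 → ℝ) : Fin 3 → ℂ :=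
  fun i => pd3 k (fun y => F y i) x

section VectorCalculus

variable {F G : (Fin 3 → ℝ) → Fin 3 → ℂ} {x : Fin 3 → ℝ}

lemma cross3_e3_vcurl (F : (Fin 3 → ℝ) → Fin 3 → ℂ) (x : Fin 3 → ℝ) (k : Fin 3) :
    cross3 (e3 k) (vcurl F x) = grad3 (fun y => F y k) x - vpd3 k F x := by
  ext i
  fin_cases k <;> fin_cases i <;> simp [cross3, e3, vcurl, grad3, vpd3]

lemma cross3_neg (a v : Fin 3 → ℂ) : cross3 a (-v) = -cross3 a v := by
  ext i
  fin_cases i <;> simp [cross3] <;> ring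

lemma vpd3_mulVec {a : (Fin 3 → ℝ) → Matrix (Fin 3) (Fin 3) ℂ}
    (ha : ∀ i j, DifferentiableAt ℝ (fun y => a y i j) x)
    (hF : ∀ j, DifferentiableAt ℝ (fun y => F y j) x) (k : Fin 3) :
    vpd3 k (fun y => a y *ᵥ F y) x = mpd3 k a x *ᵥ F x + a x *ᵥ vpd3 k F x := by
  ext i
  simp only [vpd3, mulVec, dotProduct, Pi.add_apply, mpd3, of_apply]
  rw [pd3_sum _ (F := fun j y => a y i j * F y j) fun j _ => (ha i j).mul (hF j),
    ← Finset.sum_add_distrib]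
  exact Finset.sum_congr rfl fun j _ => pd3_mul (ha i j) (hF j) k

lemma vpd3_add (hF : DifferentiableAt ℝ F x) (hG : DifferentiableAt ℝ G x) (k : Fin 3) :
    vpd3 k (fun y => F y + G y) x = vpd3 k F x + vpd3 k G x :=
  funext fun i => pd3_add (differentiableAt_pi.1 hF i) (differentiableAt_pi.1 hG i) k

lemma vdiv_congr (h : F =ᶠ[𝓝 x] G) : vdiv F x = vdiv G x :=
  Finset.sum_congr rfl fun j _ => pd3_congr (h.fun_comp (· j)) j

lemma vdiv_add (hF : ∀ j, DifferentiableAt ℝ (fun y => F y j) x)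
    (hG : ∀ j, DifferentiableAt ℝ (fun y => G y j) x) :
    vdiv (fun y => F y + G y) x = vdiv F x + vdiv G x := by
  simp only [vdiv, Pi.add_apply, ← Finset.sum_add_distrib]
  exact Finset.sum_congr rfl fun j _ => pd3_add (hF j) (hG j) j

lemma vdiv_sub (hF : ∀ j, DifferentiableAt ℝ (fun y => F y j) x)
    (hG : ∀ j, DifferentiableAt ℝ (fun y => G y j) x) :
    vdiv (fun y => F y - G y) x = vdiv F x - vdiv G x := by
  simp only [vdiv, Pi.sub_apply, ← Finset.sum_sub_distrib]
  exact Finset.sum_congr rfl fun j _ => pd3_sub (hF j) (hG j) j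

lemma vdiv_const_smul (hF : ∀ j, DifferentiableAt ℝ (fun y => F y j) x) (c : ℂ) :
    vdiv (fun y => c • F y) x = c * vdiv F x := by
  simp only [vdiv, Pi.smul_apply, smul_eq_mul, Finset.mul_sum]
  exact Finset.sum_congr rfl fun j _ => pd3_const_mul (hF j) c j

lemma vdiv_smul_e3 (g : (Fin 3 → ℝ) → ℂ) (x : Fin 3 → ℝ) (k : Fin 3) :
    vdiv (fun y => g y • e3 k) x = pd3 k g x := by
  fin_cases k <;> simp [vdiv, e3, Fin.sum_univ_three, pd3]

end VectorCalculus

section Regularity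

variable {f : (Fin 3 → ℝ) → ℂ} {F : (Fin 3 → ℝ) → Fin 3 → ℂ} {x : Fin 3 → ℝ}
  {m n : WithTop ℕ∞}

lemma ContDiffAt.pd3 (hf : ContDiffAt ℝ n f x) (hmn : m + 1 ≤ n) (j : Fin 3) :
    ContDiffAt ℝ m (pd3 j f) x :=
  (hf.fderiv_right hmn).clm_apply contDiffAt_const

lemma ContDiffAt.vpd3 (hF : ContDiffAt ℝ n F x) (hmn : m + 1 ≤ n) (k : Fin 3) :
    ContDiffAt ℝ m (vpd3 k F) x :=
  contDiffAt_pi.2 fun i => (contDiffAt_pi.1 hF i).pd3 hmn k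

lemma ContDiffAt.grad3 (hf : ContDiffAt ℝ n f x) (hmn : m + 1 ≤ n) :
    ContDiffAt ℝ m (grad3 f) x :=
  contDiffAt_pi.2 fun j => hf.pd3 hmn j

lemma ContDiffAt.vdiv (hF : ContDiffAt ℝ n F x) (hmn : m + 1 ≤ n) :
    ContDiffAt ℝ m (vdiv F) x :=
  ContDiffAt.sum fun j _ => (contDiffAt_pi.1 hF j).pd3 hmn j

lemma ContDiffAt.mulVec {a : (Fin 3 → ℝ) → Matrix (Fin 3) (Fin 3) ℂ}
    (ha : ∀ i j, ContDiffAt ℝ n (fun y => a y i j) x) (hF : ContDiffAt ℝ n F x) :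
    ContDiffAt ℝ n (fun y => a y *ᵥ F y) x :=
  contDiffAt_pi.2 fun i => show ContDiffAt ℝ n (fun y => ∑ j, a y i j * F y j) x from
    ContDiffAt.sum fun j _ => (ha i j).mul (contDiffAt_pi.1 hF j)

end Regularity

section SecondDerivatives

variable {F : (Fin 3 → ℝ) → Fin 3 → ℂ} {x : Fin 3 → ℝ}

lemma vdiv_vpd3 (hF : ContDiffAt ℝ 2 F x) (k : Fin 3) :
    vdiv (vpd3 k F) x = pd3 k (vdiv F) x := by
  have hF' (j : Fin 3) : ContDiffAt ℝ 2 (fun y => F y j) x := contDiffAt_pi.1 hF j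
  change ∑ j, pd3 j (pd3 k fun y => F y j) x = pd3 k (fun y => ∑ j, pd3 j (fun z => F z j) y) x
  rw [pd3_sum _ fun j _ => ((hF' j).pd3 le_rfl j).differentiableAt one_ne_zero]
  exact Finset.sum_congr rfl fun j _ => pd3_comm (hF' j) j k

lemma vdiv_vcurl (hF : ContDiffAt ℝ 2 F x) : vdiv (vcurl F) x = 0 := by
  have hF' (j : Fin 3) : ContDiffAt ℝ 2 (fun y => F y j) x := contDiffAt_pi.1 hF j
  have hpd (i j : Fin 3) : DifferentiableAt ℝ (pd3 i fun y => F y j) x :=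
    ((hF' j).pd3 le_rfl i).differentiableAt one_ne_zero
  simp only [vdiv, vcurl, Fin.sum_univ_three, cons_val]
  rw [pd3_sub (hpd 1 2) (hpd 2 1), pd3_sub (hpd 2 0) (hpd 0 2), pd3_sub (hpd 0 1) (hpd 1 0),
    pd3_comm (hF' 2) 0 1, pd3_comm (hF' 0) 1 2, pd3_comm (hF' 1) 2 0]
  ring

end SecondDerivatives

section Maxwell

variable {W D J : (Fin 3 → ℝ) → Fin 3 → ℂ} {x : Fin 3 → ℝ}

lemma vdiv_eq_of_vcurl_eq {s : ℂ} (hs : s ≠ 0) (hW : ContDiffAt ℝ 2 W x)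
    (hD : DifferentiableAt ℝ D x) (hJ : DifferentiableAt ℝ J x)
    (h : ∀ᶠ y in 𝓝 x, vcurl W y = s • D y + J y) :
    vdiv D x = -s⁻¹ * vdiv J x := by
  have hD' := differentiableAt_pi.1 hD
  have hJ' := differentiableAt_pi.1 hJ
  have : s * vdiv D x + vdiv J x = 0 := by
    rw [← vdiv_vcurl hW, vdiv_congr h,
      vdiv_add (F := fun y => s • D y) (fun j => (hD' j).const_smul s) hJ', vdiv_const_smul hD']
  field_simp
  linear_combination this

-- `div (∂ₖ D - g eₖ) = ∂ₖ (div D - g)`, and `div D - g` vanishes near `x`.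
lemma neg_vdiv_eq_vdiv_of_add_eq {P Q : (Fin 3 → ℝ) → Fin 3 → ℂ} {g : (Fin 3 → ℝ) → ℂ}
    (hP : DifferentiableAt ℝ P x) (hD : ContDiffAt ℝ 2 D x) (hg : DifferentiableAt ℝ g x)
    (hDg : vdiv D =ᶠ[𝓝 x] g) (k : Fin 3)
    (hPQ : ∀ᶠ y in 𝓝 x, P y + Q y = vpd3 k D y - g y • e3 k) :
    -vdiv P x = vdiv Q x := by
  have hP' := differentiableAt_pi.1 hP
  have hR : ∀ j, DifferentiableAt ℝ (fun y => (vpd3 k D y - g y • e3 k) j) x :=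
    differentiableAt_pi.1 (((hD.vpd3 le_rfl k).differentiableAt one_ne_zero).sub
      (hg.smul_const _))
  have hQ : Q =ᶠ[𝓝 x] fun y => (vpd3 k D y - g y • e3 k) - P y :=
    hPQ.mono fun y h => eq_sub_of_add_eq' h
  rw [vdiv_congr hQ, vdiv_sub hR hP', vdiv_sub, vdiv_vpd3 hD, vdiv_smul_e3, pd3_congr hDg,
    sub_self, zero_sub]
  · exact differentiableAt_pi.1 ((hD.vpd3 le_rfl k).differentiableAt one_ne_zero)
  · exact fun j => hg.mul_const _

end Maxwell

theorem neg_vdiv_mulVec_grad_eq {a b : (Fin 3 → ℝ) → Matrix (Fin 3) (Fin 3) ℂ}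
    {E H W J : (Fin 3 → ℝ) → Fin 3 → ℂ} {x : Fin 3 → ℝ} {s : ℂ} (hs : s ≠ 0)
    (ha : ∀ i j, ContDiffAt ℝ 2 (fun y => a y i j) x)
    (hb : ∀ i j, ContDiffAt ℝ 2 (fun y => b y i j) x)
    (hE : ContDiffAt ℝ 2 E x) (hH : ContDiffAt ℝ 2 H x) (hW : ContDiffAt ℝ 2 W x)
    (hJ : ContDiffAt ℝ 2 J x)
    (hcurl : ∀ᶠ y in 𝓝 x, vcurl W y = s • (a y *ᵥ E y + b y *ᵥ H y) + J y) (k : Fin 3) :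
    -vdiv (fun y => a y *ᵥ grad3 (fun z => E z k) y + b y *ᵥ grad3 (fun z => H z k) y) x
      = vdiv (fun y => mpd3 k a y *ᵥ E y + mpd3 k b y *ᵥ H y
          - a y *ᵥ cross3 (e3 k) (vcurl E y) - b y *ᵥ cross3 (e3 k) (vcurl H y)
          + (s⁻¹ * vdiv J y) • e3 k) x := by
  have hD : ContDiffAt ℝ 2 (fun y => a y *ᵥ E y + b y *ᵥ H y) x :=
    (ContDiffAt.mulVec ha hE).add (ContDiffAt.mulVec hb hH)
  have hC1 {f : (Fin 3 → ℝ) → ℂ} (hf : ContDiffAt ℝ 2 f x) : ContDiffAt ℝ 1 f x :=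
    hf.of_le one_le_two
  have hP : ContDiffAt ℝ 1
      (fun y => a y *ᵥ grad3 (fun z => E z k) y + b y *ᵥ grad3 (fun z => H z k) y) x :=
    (ContDiffAt.mulVec (fun i j => hC1 (ha i j)) ((contDiffAt_pi.1 hE k).grad3 le_rfl)).add
      (ContDiffAt.mulVec (fun i j => hC1 (hb i j)) ((contDiffAt_pi.1 hH k).grad3 le_rfl))
  have hdivD : vdiv (fun y => a y *ᵥ E y + b y *ᵥ H y) =ᶠ[𝓝 x]
      fun y => -s⁻¹ * vdiv J y := by
    filter_upwards [hcurl.eventually_nhds, hW.eventually (by simp), hD.eventually (by simp),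
      hJ.eventually (by simp)] with y hcurl_y hW_y hD_y hJ_y
    exact vdiv_eq_of_vcurl_eq hs hW_y (hD_y.differentiableAt two_ne_zero)
      (hJ_y.differentiableAt two_ne_zero) hcurl_y
  refine neg_vdiv_eq_vdiv_of_add_eq (hP.differentiableAt one_ne_zero) hD
    (((hJ.vdiv le_rfl).differentiableAt one_ne_zero).const_mul _) hdivD k ?_
  have hdiff {G : Type} [NormedAddCommGroup G] [NormedSpace ℝ G] {f : (Fin 3 → ℝ) → G}
      (hf : ContDiffAt ℝ 2 f x) : ∀ᶠ y in 𝓝 x, DifferentiableAt ℝ f y :=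
    (hf.eventually (by simp)).mono fun y hy => hy.differentiableAt two_ne_zero
  filter_upwards [eventually_all.2 fun i => eventually_all.2 fun j => hdiff (ha i j),
    eventually_all.2 fun i => eventually_all.2 fun j => hdiff (hb i j),
    hdiff hE, hdiff hH, hdiff (ContDiffAt.mulVec ha hE), hdiff (ContDiffAt.mulVec hb hH)]
    with y ha_y hb_y hE_y hH_y haE_y hbH_y
  rw [vpd3_add haE_y hbH_y, vpd3_mulVec ha_y (differentiableAt_pi.1 hE_y),
    vpd3_mulVec hb_y (differentiableAt_pi.1 hH_y), cross3_e3_vcurl, cross3_e3_vcurl,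
    mulVec_sub, mulVec_sub, neg_mul, neg_smul, sub_neg_eq_add]
  abel

/-- Strong form of the coupled elliptic system satisfied by the components of the
electromagnetic fields in bi-anisotropic media (Proposition A.1, strong form). -/
theorem stmt_10
    (Ω : Set (Fin 3 → ℝ)) (hΩ : IsOpen Ω) (ω : ℂ) (hω : ω ≠ 0)
    (ε μ ξ ζ : (Fin 3 → ℝ) → Matrix (Fin 3) (Fin 3) ℂ)
    (E H Je Jm : (Fin 3 → ℝ) → Fin 3 → ℂ)
    (hε : ∀ i j, ContDiffOn ℝ 2 (fun x => ε x i j) Ω)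
    (hμ : ∀ i j, ContDiffOn ℝ 2 (fun x => μ x i j) Ω)
    (hξ : ∀ i j, ContDiffOn ℝ 2 (fun x => ξ x i j) Ω)
    (hζ : ∀ i j, ContDiffOn ℝ 2 (fun x => ζ x i j) Ω)
    (hE : ContDiffOn ℝ 2 E Ω) (hH : ContDiffOn ℝ 2 H Ω)
    (hJe : ContDiffOn ℝ 2 Je Ω) (hJm : ContDiffOn ℝ 2 Jm Ω)
    (hM1 : ∀ x ∈ Ω,
      vcurl H x = (Complex.I * ω) • (ε x *ᵥ E x + ξ x *ᵥ H x) + Je x)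
    (hM2 : ∀ x ∈ Ω,
      vcurl E x = -((Complex.I * ω) • (ζ x *ᵥ E x + μ x *ᵥ H x)) + Jm x) :
    ∀ x ∈ Ω, ∀ k : Fin 3,
      (-vdiv (fun y =>
          ε y *ᵥ grad3 (fun z => E z k) y + ξ y *ᵥ grad3 (fun z => H z k) y) x
        = vdiv (fun y =>
            mpd3 k ε y *ᵥ E y + mpd3 k ξ y *ᵥ H y
            - ε y *ᵥ cross3 (e3 k)
                (-((Complex.I * ω) • (ζ y *ᵥ E y)) - (Complex.I * ω) • (μ y *ᵥ H y) + Jm y)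
            - ξ y *ᵥ cross3 (e3 k)
                ((Complex.I * ω) • (ε y *ᵥ E y) + (Complex.I * ω) • (ξ y *ᵥ H y) + Je y)
            - ((Complex.I / ω) * vdiv Je y) • e3 k) x) ∧
      (-vdiv (fun y =>
          ζ y *ᵥ grad3 (fun z => E z k) y + μ y *ᵥ grad3 (fun z => H z k) y) x
        = vdiv (fun y =>
            mpd3 k ζ y *ᵥ E y + mpd3 k μ y *ᵥ H y
            - μ y *ᵥ cross3 (e3 k)
                ((Complex.I * ω) • (ε y *ᵥ E y) + (Complex.I * ω) • (ξ y *ᵥ H y) + Je y)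
            + ζ y *ᵥ cross3 (e3 k)
                ((Complex.I * ω) • (ζ y *ᵥ E y) + (Complex.I * ω) • (μ y *ᵥ H y) - Jm y)
            + ((Complex.I / ω) * vdiv Jm y) • e3 k) x) := by
  intro x hx k
  have hΩx : Ω ∈ 𝓝 x := hΩ.mem_nhds hx
  have hC {G : Type} [NormedAddCommGroup G] [NormedSpace ℝ G] {f : (Fin 3 → ℝ) → G}
      (hf : ContDiffOn ℝ 2 f Ω) : ContDiffAt ℝ 2 f x :=
    hf.contDiffAt hΩx
  have hIω : Complex.I * ω ≠ 0 := mul_ne_zero Complex.I_ne_zero hω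
  have hinv : (Complex.I * ω)⁻¹ = -(Complex.I / ω) := by
    rw [mul_inv, Complex.inv_I, neg_mul, div_eq_mul_inv]
  have hcurlH (y) (hy : y ∈ Ω) : vcurl H y
      = (Complex.I * ω) • (ε y *ᵥ E y) + (Complex.I * ω) • (ξ y *ᵥ H y) + Je y := by
    rw [hM1 y hy, smul_add]
  constructor
  · have hcurlE (y) (hy : y ∈ Ω) : vcurl E y
        = -((Complex.I * ω) • (ζ y *ᵥ E y)) - (Complex.I * ω) • (μ y *ᵥ H y) + Jm y := by
      rw [hM2 y hy, smul_add, neg_add, sub_eq_add_neg]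
    refine (neg_vdiv_mulVec_grad_eq hIω (fun i j => hC (hε i j)) (fun i j => hC (hξ i j))
      (hC hE) (hC hH) (hC hH) (hC hJe) (eventually_of_mem hΩx hM1) k).trans
      (vdiv_congr (eventually_of_mem hΩx fun y hy => ?_))
    dsimp only
    rw [hcurlE y hy, hcurlH y hy, hinv, neg_mul, neg_smul, ← sub_eq_add_neg]
  · have hcurlE (y) (hy : y ∈ Ω) : vcurl E y
        = -((Complex.I * ω) • (ζ y *ᵥ E y) + (Complex.I * ω) • (μ y *ᵥ H y) - Jm y) := by
      rw [hM2 y hy, smul_add, neg_sub', sub_neg_eq_add]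
    have hM2' (y) (hy : y ∈ Ω) :
        vcurl E y = -(Complex.I * ω) • (ζ y *ᵥ E y + μ y *ᵥ H y) + Jm y := by
      rw [hM2 y hy, neg_smul]
    refine (neg_vdiv_mulVec_grad_eq (neg_ne_zero.2 hIω) (fun i j => hC (hζ i j))
      (fun i j => hC (hμ i j)) (hC hE) (hC hH) (hC hE) (hC hJm)
      (eventually_of_mem hΩx hM2') k).trans
      (vdiv_congr (eventually_of_mem hΩx fun y hy => ?_))
    dsimp only
    rw [hcurlE y hy, hcurlH y hy, cross3_neg, mulVec_neg, inv_neg, hinv, neg_neg]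
    abel

end
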